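/- arXiv:math/0603007 — 5 statements merged into one kernel-verified Lean document; each statement's English description precedes it below -/
import Mathlib

section
/- (Wielandt's theorem) The gamma function is the only holomorphic function on the right half plane A = {z : Re(z) > 0} satisfying: (1) Γ(1) = 1; (2) Γ(z+1) = z·Γ(z) for all z ∈ A; (3) Γ is bounded on the strip {z : 1 ≤ Re(z) < 2}. That is, if f is holomorphic on A with f(1) = 1, f(z+1) = z·f(z) for all z ∈ A, and f is bounded on {z : 1 ≤ Re(z) < 2}, then f(z) = Γ(z) for all z ∈ A. -/
open Complex Set

lemma gamma_norm_le {z : ℂ} (hz : 0 < z.re) : ‖Complex.Gamma z‖ ≤ Real.Gamma z.re := by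
  rw [Complex.Gamma_eq_integral hz, Complex.GammaIntegral,
    Real.Gamma_eq_integral hz]
  refine le_trans (MeasureTheory.norm_integral_le_integral_norm _) (le_of_eq ?_)
  refine MeasureTheory.setIntegral_congr_fun measurableSet_Ioi (fun t ht => ?_)
  have ht' : (0:ℝ) < t := ht
  simp only [norm_mul]
  rw [Complex.norm_cpow_eq_rpow_re_of_pos ht']
  simp [Complex.norm_exp, Complex.sub_re]

lemma wielandt_zero (g : ℂ → ℂ)
    (hol : DifferentiableOn ℂ g {z : ℂ | 0 < z.re})
    (h1 : g 1 = 0)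
    (hrec : ∀ z : ℂ, 0 < z.re → g (z + 1) = z * g z)
    (M : ℝ) (hM : 0 ≤ M)
    (hbd : ∀ z : ℂ, 1 ≤ z.re → z.re < 2 → ‖g z‖ ≤ M) :
    ∀ z : ℂ, 0 < z.re → g z = 0 := by
  have hA : IsOpen {z : ℂ | 0 < z.re} := isOpen_lt continuous_const Complex.continuous_re
  have hAan : AnalyticOnNhd ℂ g {z : ℂ | 0 < z.re} := hol.analyticOnNhd hA
  set w : ℂ → ℂ := fun z => dslope g 1 (z + 1) with hw
  have hw_eq : ∀ z : ℂ, z ≠ 0 → w z = g (z + 1) / z := by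
    intro z hz
    have : z + 1 ≠ 1 := by simpa using hz
    rw [hw]
    simp only [dslope_of_ne g this, slope, h1, sub_zero, add_sub_cancel_right, vsub_eq_sub]
    rw [smul_eq_mul, mul_comm, div_eq_mul_inv]
  have hwg : ∀ z : ℂ, 0 < z.re → w z = g z := by
    intro z hz
    have hz0 : z ≠ 0 := by rintro rfl; simp at hz
    rw [hw_eq z hz0, hrec z hz, mul_div_cancel_left₀ _ hz0]
  have hwdiff : ∀ z : ℂ, -1 < z.re → DifferentiableAt ℂ w z := by
    intro z hz
    by_cases h0 : z = 0
    · subst h0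
      obtain ⟨p, hp⟩ := hAan 1 (by norm_num)
      have hd : DifferentiableAt ℂ (dslope g 1) 1 :=
        hp.has_fpower_series_dslope_fslope.analyticAt.differentiableAt
      have h2 : DifferentiableAt ℂ (fun z : ℂ => z + 1) (0 : ℂ) :=
        differentiableAt_id.add_const 1
      have h3 := DifferentiableAt.comp (0 : ℂ) (by simpa using hd) h2
      simpa [Function.comp_def] using h3
    · have hd1 : DifferentiableAt ℂ (fun z : ℂ => g (z + 1) / z) z := by
        refine DifferentiableAt.div ?_ differentiableAt_id h0
        have hmem : (z + 1) ∈ {z : ℂ | 0 < z.re} := by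
          simp only [mem_setOf_eq, add_re, one_re]; linarith
        have h2 : DifferentiableAt ℂ (fun z : ℂ => z + 1) z :=
          differentiableAt_id.add_const 1
        have h3 := DifferentiableAt.comp z (hol.differentiableAt (hA.mem_nhds hmem)) h2
        simpa [Function.comp_def] using h3
      refine hd1.congr_of_eventuallyEq ?_
      filter_upwards [isOpen_ne.mem_nhds h0] with x hx
      exact hw_eq x hx
  have hwrec : ∀ z : ℂ, g (z + 1) = z * w z := by
    intro z
    by_cases h0 : z = 0
    · simp [h0, h1]
    · rw [hw_eq z h0, mul_div_cancel₀ _ h0]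
  set F : ℂ → ℂ := fun z => w z * w (1 - z) with hF
  have hFrec : ∀ z : ℂ, -1 < z.re → z.re < 1 → F (z + 1) = -F z := by
    intro z hz1 hz2
    have e1 : w (z + 1) = z * w z := by
      rw [hwg (z + 1) (by simp only [add_re, one_re]; linarith), hwrec z]
    have e2 : w (1 - z) = (-z) * w (-z) := by
      have : (1 : ℂ) - z = -z + 1 := by ring
      rw [this, hwg (-z + 1) (by simp only [add_re, one_re, neg_re]; linarith), hwrec (-z)]
    have : (1 : ℂ) - (z + 1) = -z := by ring
    rw [hF]
    simp only [this, e1, e2]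
    ring
  have hFdiff : ∀ z : ℂ, -1 < z.re → z.re < 2 → DifferentiableAt ℂ F z := by
    intro z hz1 hz2
    refine (hwdiff z hz1).mul ?_
    have hd : DifferentiableAt ℂ w (1 - z) := by
      apply hwdiff; simp only [sub_re, one_re]; linarith
    have h2 : DifferentiableAt ℂ (fun x : ℂ => 1 - x) z :=
      (differentiableAt_const 1).sub differentiableAt_id
    have h3 := DifferentiableAt.comp z hd h2
    simpa [Function.comp_def] using h3
  -- boundedness of w on the closed strip 0 ≤ re ≤ 1
  have hwcont : ContinuousOn w (Metric.closedBall (0:ℂ) 1 ∩ {z : ℂ | 0 ≤ z.re}) := by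
    intro z hz
    have h1' : -1 < z.re := by
      have := hz.2; simp only [mem_setOf_eq] at this; linarith
    exact ((hwdiff z h1').continuousAt).continuousWithinAt
  obtain ⟨C, hC⟩ := (((isCompact_closedBall (0:ℂ) 1).inter_right
    (isClosed_le continuous_const Complex.continuous_re)).exists_bound_of_continuousOn hwcont)
  set B : ℝ := max M (max C 0) with hB
  have hB0 : 0 ≤ B := le_max_of_le_right (le_max_right _ _)
  have hwbd : ∀ z : ℂ, 0 ≤ z.re → z.re ≤ 1 → ‖w z‖ ≤ B := by
    intro z hz1 hz2
    by_cases hball : ‖z‖ ≤ 1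
    · refine le_trans (hC z ⟨by simpa [Metric.mem_closedBall] using hball, hz1⟩) ?_
      exact le_max_of_le_right (le_max_left _ _)
    · push_neg at hball
      have hz0 : z ≠ 0 := by
        intro h; rw [h] at hball; norm_num at hball
      rcases lt_or_eq_of_le hz2 with hlt | heq
      · rw [hw_eq z hz0]
        rw [norm_div]
        have hnum : ‖g (z + 1)‖ ≤ M := by
          apply hbd <;> simp only [add_re, one_re] <;> linarith
        refine le_trans ?_ (le_max_left _ _)
        calc ‖g (z+1)‖ / ‖z‖ ≤ M / 1 := by
              apply div_le_div₀ (by linarith [norm_nonneg (g (z+1))]) hnum one_pos hball.le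
          _ = M := div_one M
      · rw [hwg z (by linarith)]
        exact le_trans (hbd z (by linarith) (by linarith)) (le_max_left _ _)
  have hFbd : ∀ z : ℂ, 0 ≤ z.re → z.re ≤ 1 → ‖F z‖ ≤ B * B := by
    intro z hz1 hz2
    rw [hF]
    simp only [norm_mul]
    refine mul_le_mul (hwbd z hz1 hz2) (hwbd (1-z) ?_ ?_) (norm_nonneg _) hB0 <;>
      simp only [sub_re, one_re] <;> linarith
  -- the entire function G
  set G : ℂ → ℂ := fun z => (-1 : ℂ) ^ (⌊z.re⌋) * F (z - (⌊z.re⌋ : ℤ)) with hG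
  have hGdiff : Differentiable ℂ G := by
    intro c
    set n : ℤ := ⌊c.re⌋ with hn
    have hn1 : (n : ℝ) ≤ c.re := Int.floor_le _
    have hn2 : c.re < n + 1 := Int.lt_floor_add_one _
    have hFc : DifferentiableAt ℂ (fun z : ℂ => (-1 : ℂ) ^ n * F (z - (n : ℤ))) c := by
      have hd : DifferentiableAt ℂ F (c - (n : ℤ)) := by
        apply hFdiff <;> simp only [sub_re, intCast_re] <;> push_cast <;> linarith
      have h2 : DifferentiableAt ℂ (fun z : ℂ => z - ((n : ℤ) : ℂ)) c :=
        differentiableAt_id.sub_const _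
      have h3 := DifferentiableAt.comp c hd h2
      exact ((by simpa [Function.comp_def] using h3 :
        DifferentiableAt ℂ (fun z : ℂ => F (z - (n : ℤ))) c).const_mul _)
    refine hFc.congr_of_eventuallyEq ?_
    rcases lt_or_eq_of_le hn1 with hlt | heq
    · -- c.re not an integer from below: floor locally constant
      have hopen : IsOpen {z : ℂ | (n : ℝ) < z.re ∧ z.re < n + 1} := by
        apply IsOpen.inter (isOpen_lt continuous_const Complex.continuous_re)
          (isOpen_lt Complex.continuous_re continuous_const)
      filter_upwards [hopen.mem_nhds ⟨hlt, hn2⟩] with z hz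
      have : ⌊z.re⌋ = n := Int.floor_eq_iff.mpr ⟨hz.1.le, hz.2⟩
      rw [hG]; simp only [this]
    · -- c.re = n
      have hopen : IsOpen {z : ℂ | (n : ℝ) - 1/2 < z.re ∧ z.re < n + 1} :=
        IsOpen.inter (isOpen_lt continuous_const Complex.continuous_re)
          (isOpen_lt Complex.continuous_re continuous_const)
      filter_upwards [hopen.mem_nhds ⟨by rw [← heq]; norm_num, hn2⟩] with z hz
      rcases le_or_gt (n : ℝ) z.re with h | h
      · have : ⌊z.re⌋ = n := Int.floor_eq_iff.mpr ⟨h, hz.2⟩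
        rw [hG]; simp only [this]
      · have hfl : ⌊z.re⌋ = n - 1 := by
          apply Int.floor_eq_iff.mpr
          constructor
          · push_cast; linarith [hz.1]
          · push_cast; linarith
        have hrw : z - ((n : ℤ) - 1 : ℤ) = (z - (n:ℤ)) + 1 := by push_cast; ring
        have hre1 : -1 < (z - ((n:ℤ):ℂ)).re := by
          simp only [sub_re, intCast_re]; linarith [hz.1]
        have hre2 : (z - ((n:ℤ):ℂ)).re < 1 := by
          simp only [sub_re, intCast_re]; linarith
        rw [hG]; simp only [hfl]
        rw [hrw, hFrec _ hre1 hre2]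
        rw [zpow_sub_one₀ (by norm_num : (-1:ℂ) ≠ 0)]
        ring
  have hGbd : ∀ z : ℂ, ‖G z‖ ≤ B * B := by
    intro z
    rw [hG]
    simp only [norm_mul, norm_zpow, norm_neg, norm_one, one_zpow, one_mul]
    refine hFbd _ ?_ ?_ <;> simp only [sub_re, intCast_re]
    · linarith [Int.floor_le z.re]
    · linarith [Int.lt_floor_add_one z.re]
  have hGrange : Bornology.IsBounded (Set.range G) := by
    rw [Metric.isBounded_iff_subset_closedBall 0]
    exact ⟨B * B, by rintro _ ⟨z, rfl⟩; simpa [Metric.mem_closedBall] using hGbd z⟩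
  have hG1 : G 1 = 0 := by
    rw [hG]
    have : ⌊(1:ℂ).re⌋ = 1 := by norm_num
    simp only [this]
    have : (1:ℂ) - ((1:ℤ):ℂ) = 0 := by norm_num
    rw [this, hF]
    simp only
    have h10 : (1:ℂ) - 0 = 1 := by norm_num
    rw [h10, hwg 1 (by norm_num), h1]
    ring
  have hGzero : ∀ z : ℂ, G z = 0 := fun z => by
    rw [hGdiff.apply_eq_apply_of_bounded hGrange z 1, hG1]
  have hF0 : ∀ z : ℂ, 0 ≤ z.re → z.re < 1 → F z = 0 := by
    intro z hz1 hz2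
    have hfl : ⌊z.re⌋ = 0 := Int.floor_eq_iff.mpr ⟨by exact_mod_cast hz1, by push_cast; linarith⟩
    have := hGzero z
    rw [hG] at this
    simp only [hfl] at this
    simpa using this
  -- identity theorem conclusion
  have hpre : IsPreconnected {z : ℂ | 0 < z.re} := (convex_halfSpace_re_gt 0).isPreconnected
  have hzero : AnalyticOnNhd ℂ (fun _ : ℂ => (0:ℂ)) {z : ℂ | 0 < z.re} :=
    analyticOnNhd_const
  have key : ∃ z₀ : ℂ, ∃ r : ℝ, 0 < r ∧ z₀ ∈ {z : ℂ | 0 < z.re} ∧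
      EqOn g (fun _ => 0) (Metric.ball z₀ r) ∧ Metric.ball z₀ r ⊆ {z : ℂ | 0 < z.re} := by
    by_cases hc : ∀ z : ℂ, 0 < z.re → z.re < 1 → g z = 0
    · refine ⟨(1/2 : ℂ), 1/4, by norm_num, by norm_num, ?_, ?_⟩
      · intro z hz
        rw [Metric.mem_ball, Complex.dist_eq] at hz
        have h1' := Complex.abs_re_le_norm (z - 1/2)
        have : |z.re - 1/2| < 1/4 := by
          have : (z - 1/2).re = z.re - 1/2 := by simp
          rw [← this]; exact lt_of_le_of_lt h1' hz
        rw [abs_lt] at this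
        exact hc z (by norm_num; linarith) (by linarith)
      · intro z hz
        rw [Metric.mem_ball, Complex.dist_eq] at hz
        have h1' := Complex.abs_re_le_norm (z - 1/2)
        have : |z.re - 1/2| < 1/4 := by
          have : (z - 1/2).re = z.re - 1/2 := by simp
          rw [← this]; exact lt_of_le_of_lt h1' hz
        rw [abs_lt] at this
        simp only [mem_setOf_eq]; linarith
    · push_neg at hc
      obtain ⟨z₀, hz₀1, hz₀2, hz₀ne⟩ := hc
      have hwne : w z₀ ≠ 0 := by rw [hwg z₀ hz₀1]; exact hz₀ne
      have hcont : ContinuousAt w z₀ := (hwdiff z₀ (by linarith)).continuousAt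
      have hev : ∀ᶠ z in nhds z₀, w z ≠ 0 := hcont.eventually_ne hwne
      have hopen : IsOpen {z : ℂ | 0 < z.re ∧ z.re < 1} :=
        IsOpen.inter (isOpen_lt continuous_const Complex.continuous_re)
          (isOpen_lt Complex.continuous_re continuous_const)
      have hmem : {z : ℂ | 0 < z.re ∧ z.re < 1} ∈ nhds z₀ := hopen.mem_nhds ⟨hz₀1, hz₀2⟩
      obtain ⟨r, hr, hball⟩ := Metric.mem_nhds_iff.mp (Filter.inter_mem hmem hev)
      have hkey : ∀ y : ℂ, y ∈ Metric.ball (1 - z₀) r → 0 < y.re ∧ g y = 0 := by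
        intro y hy
        rw [Metric.mem_ball, Complex.dist_eq] at hy
        have hz : (1 - y) ∈ Metric.ball z₀ r := by
          rw [Metric.mem_ball, Complex.dist_eq]
          have h12 : 1 - y - z₀ = -(y - (1 - z₀)) := by ring
          rw [h12, norm_neg]
          exact hy
        obtain ⟨⟨hre1, hre2⟩, hwz⟩ := hball hz
        have hre2' : 1 - y.re < 1 := by
          have h13 : (1 - y).re = 1 - y.re := by simp
          rw [h13] at hre2; exact hre2
        have hyre : 0 < y.re := by linarith
        refine ⟨hyre, ?_⟩
        have hFz : F (1 - y) = 0 := hF0 _ hre1.le hre2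
        rw [hF] at hFz
        simp only at hFz
        have h11 : (1:ℂ) - (1 - y) = y := by ring
        rw [h11] at hFz
        rcases mul_eq_zero.mp hFz with h | h
        · exact absurd h hwz
        · rw [← hwg y hyre]; exact h
      refine ⟨1 - z₀, r, hr, by simp only [mem_setOf_eq, sub_re, one_re]; linarith,
        fun y hy => (hkey y hy).2, fun y hy => (hkey y hy).1⟩
  obtain ⟨z₀, r, hr, hz₀A, heq, hsub⟩ := key
  have := hAan.eqOn_of_preconnected_of_eventuallyEq hzero hpre hz₀A
    (Filter.eventuallyEq_of_mem (Metric.ball_mem_nhds z₀ hr) heq)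
  intro z hz
  exact this hz

/-- **Wielandt's theorem**: the Gamma function is the only holomorphic function on the
right half plane with `f 1 = 1`, `f (z+1) = z * f z`, bounded on the strip
`1 ≤ re z < 2`. -/
theorem wielandt (f : ℂ → ℂ)
    (hol : DifferentiableOn ℂ f {z : ℂ | 0 < z.re})
    (h1 : f 1 = 1)
    (hrec : ∀ z : ℂ, 0 < z.re → f (z + 1) = z * f z)
    (hbd : ∃ M : ℝ, ∀ z : ℂ, 1 ≤ z.re → z.re < 2 → ‖f z‖ ≤ M) :
    ∀ z : ℂ, 0 < z.re → f z = Complex.Gamma z := by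
  obtain ⟨M, hM⟩ := hbd
  set g : ℂ → ℂ := fun z => f z - Complex.Gamma z with hg
  have hGammaDiff : ∀ z : ℂ, 0 < z.re → DifferentiableAt ℂ Complex.Gamma z := by
    intro z hz
    refine Complex.differentiableAt_Gamma z (fun m => ?_)
    intro h
    rw [h] at hz
    simp only [neg_re, natCast_re] at hz
    have : (0:ℝ) ≤ (m:ℝ) := Nat.cast_nonneg m
    linarith
  have hgdiff : DifferentiableOn ℂ g {z : ℂ | 0 < z.re} :=
    hol.sub (fun z hz => (hGammaDiff z hz).differentiableWithinAt)
  have hg1 : g 1 = 0 := by rw [hg]; simp [h1, Complex.Gamma_one]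
  have hgrec : ∀ z : ℂ, 0 < z.re → g (z + 1) = z * g z := by
    intro z hz
    have hz0 : z ≠ 0 := by rintro rfl; simp at hz
    rw [hg]
    simp only
    rw [hrec z hz, Complex.Gamma_add_one z hz0]
    ring
  obtain ⟨C, hC⟩ := isCompact_Icc.exists_bound_of_continuousOn
    (f := Real.Gamma) (s := Set.Icc (1:ℝ) 2)
    (fun x hx => (Real.differentiableAt_Gamma (fun m => by
      have h1x := hx.1
      have : (0:ℝ) ≤ (m:ℝ) := Nat.cast_nonneg m
      intro h; rw [h] at h1x; linarith)).continuousAt.continuousWithinAt)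
  have hgbd : ∀ z : ℂ, 1 ≤ z.re → z.re < 2 → ‖g z‖ ≤ max (M + C) 0 := by
    intro z hz1 hz2
    refine le_trans (le_trans (norm_sub_le _ _) ?_) (le_max_left _ _)
    have hb1 : ‖f z‖ ≤ M := hM z hz1 hz2
    have hb2 : ‖Complex.Gamma z‖ ≤ C := by
      refine le_trans (gamma_norm_le (by linarith)) ?_
      have : ‖Real.Gamma z.re‖ ≤ C := hC z.re ⟨hz1, hz2.le⟩
      exact le_trans (le_abs_self _) this
    linarith
  intro z hz
  have := wielandt_zero g hgdiff hg1 hgrec (max (M + C) 0) (le_max_right _ _) hgbd z hz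
  rw [hg] at this
  simp only at this
  linear_combination this
end

section
/- (Aissen's lemma) Let (y_n) be a sequence of nonzero real numbers and α a real number such that y_{n+1}/y_n = 1 + α/n + O(n^{-2}) as n → ∞. Then there exists a nonzero constant C such that y_n ~ C·n^α as n → ∞, i.e., y_n / n^α → C. -/
open Filter Asymptotics Topology

lemma aissen_log_aux {t : ℝ} (ht : |t| ≤ 1/2) : |Real.log (1+t) - t| ≤ 2 * t^2 := by
  have h1 : |(-t)| < 1 := by rw [abs_neg]; linarith [abs_nonneg t]
  have h2 := Real.abs_log_sub_add_sum_range_le h1 1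
  simp only [Finset.sum_range_one, pow_one, Nat.cast_zero, zero_add, div_one, abs_neg,
    sub_neg_eq_add] at h2
  rw [neg_add_eq_sub] at h2
  have h4 : |t| ^ (1+1) / (1 - |t|) ≤ 2 * t ^ 2 := by
    rw [div_le_iff₀ (by linarith [abs_nonneg t])]
    have e : |t| ^ (1+1) = t^2 := by rw [show (1+1)=2 from rfl, sq_abs]
    rw [e]
    nlinarith [sq_nonneg t, abs_nonneg t, mul_nonneg (sq_nonneg t) (show (0:ℝ) ≤ 1 - 2*|t| by linarith)]
  exact h2.trans h4

/-- **Aissen's lemma**: if `y (n+1) / y n = 1 + α / n + O (n ^ (-2))` as `n → ∞`,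
and `y n ≠ 0` for all `n`, then `y n ~ C * n ^ α` for some nonzero constant `C`. -/
theorem aissen_lemma (y : ℕ → ℝ) (α : ℝ)
    (hy : ∀ n, y n ≠ 0)
    (h : (fun n : ℕ => y (n + 1) / y n - (1 + α / n)) =O[atTop]
      fun n : ℕ => ((n : ℝ) ^ 2)⁻¹) :
    ∃ C : ℝ, C ≠ 0 ∧ Tendsto (fun n : ℕ => y n / (n : ℝ) ^ α) atTop (𝓝 C) := by
  rw [isBigO_iff] at h
  obtain ⟨c, hc⟩ := h
  rw [eventually_atTop] at hc
  obtain ⟨N₁, hN₁⟩ := hc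
  set K : ℝ := max c 0 with hKdef
  have hK0 : 0 ≤ K := le_max_right _ _
  set A : ℝ := |α| + K + 1 with hAdef
  have hA1 : 1 ≤ A := by have := abs_nonneg α; simp only [hAdef]; linarith
  set N : ℕ := max (max N₁ 2) ⌈(2*A)⌉₊ with hNdef
  set f : ℕ → ℝ := fun n => Real.log |y n| - α * Real.log n with hfdef
  -- the main estimate
  have hmain : ∀ n, N ≤ n → |f (n+1) - f n| ≤ (2*A^2 + K + 2*|α|) * ((n:ℝ)^2)⁻¹ := by
    intro n hn
    have hN₁n : N₁ ≤ n := le_trans (le_trans (le_max_left _ _) (le_max_left _ _)) hn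
    have h2n : (2:ℝ) ≤ n := by
      have : 2 ≤ n := le_trans (le_trans (le_max_right N₁ 2) (le_max_left _ _)) hn
      exact_mod_cast this
    have h0n : (0:ℝ) < n := by linarith
    have h1n : (1:ℝ) ≤ n := by linarith
    have hn0 : (n:ℝ) ≠ 0 := ne_of_gt h0n
    have hAn : 2*A ≤ n := by
      have h' : ⌈(2*A)⌉₊ ≤ n := le_trans (le_max_right _ _) hn
      exact le_trans (Nat.le_ceil _) (by exact_mod_cast h')
    set u : ℝ := α / n + (y (n+1)/y n - (1 + α/n)) with hu
    clear_value u
    have hen : |y (n+1)/y n - (1 + α/n)| ≤ K / (n:ℝ)^2 := by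
      have h1 := hN₁ n hN₁n
      rw [Real.norm_eq_abs, Real.norm_eq_abs, abs_of_nonneg (by positivity : (0:ℝ) ≤ ((n:ℝ)^2)⁻¹)] at h1
      calc |y (n+1)/y n - (1 + α/n)| ≤ c * ((n:ℝ)^2)⁻¹ := h1
        _ ≤ K * ((n:ℝ)^2)⁻¹ := by gcongr; exact le_max_left _ _
        _ = K / (n:ℝ)^2 := by rw [div_eq_mul_inv]
    have huabs : |u| ≤ A / n := by
      have hnsq : (n:ℝ) ≤ (n:ℝ)^2 := by nlinarith
      calc |u| = |α / n + (y (n+1)/y n - (1 + α/n))| := by rw [hu]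
        _ ≤ |α / n| + |y (n+1)/y n - (1 + α/n)| := abs_add_le _ _
        _ ≤ |α| / n + K / (n:ℝ)^2 := by
            have e1 : |α / (n:ℝ)| = |α| / n := by rw [abs_div, abs_of_pos h0n]
            rw [e1]
            exact add_le_add le_rfl hen
        _ ≤ |α| / n + K / n := by gcongr
        _ ≤ A / n := by
            rw [← add_div]
            gcongr
            have hA : A = |α| + K + 1 := hAdef
            linarith
    have hu2 : |u| ≤ 1/2 := by
      refine huabs.trans ?_
      rw [div_le_iff₀ h0n]
      linarith
    have hupos : (0:ℝ) < 1 + u := by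
      obtain ⟨hl, hr⟩ := abs_le.mp hu2
      linarith
    have hrat : y (n+1)/y n = 1 + u := by rw [hu]; ring
    have key1 : Real.log |y (n+1)| - Real.log |y n| = Real.log (1+u) := by
      rw [← Real.log_div (abs_ne_zero.mpr (hy _)) (abs_ne_zero.mpr (hy _)), ← abs_div, hrat,
        abs_of_pos hupos]
    have key2 : Real.log ((n:ℝ)+1) - Real.log n = Real.log (1+1/(n:ℝ)) := by
      rw [← Real.log_div (by positivity) hn0]
      congr 1
      field_simp
    have hfd : f (n+1) - f n =
        (Real.log (1+u) - u) + (u - α/n) - α * (Real.log (1+1/(n:ℝ)) - 1/n) := by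
      have step : f (n+1) - f n = (Real.log |y (n+1)| - Real.log |y n|)
          - α * (Real.log ((n:ℝ)+1) - Real.log n) := by
        simp only [hfdef]
        push_cast
        ring
      rw [step, key1, key2]
      ring
    have b1 : |Real.log (1+u) - u| ≤ 2*u^2 := aissen_log_aux hu2
    have hue : u - α/n = y (n+1)/y n - (1 + α/n) := by rw [hu]; ring
    have hhalf : |1/(n:ℝ)| ≤ 1/2 := by
      rw [abs_of_pos (by positivity)]
      rw [div_le_div_iff₀ h0n (by norm_num)]
      linarith
    have b2 : |Real.log (1+1/(n:ℝ)) - 1/n| ≤ 2*(1/(n:ℝ))^2 := aissen_log_aux hhalf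
    have husq : u^2 ≤ (A/n)^2 := by
      rw [← sq_abs]
      exact pow_le_pow_left₀ (abs_nonneg u) huabs 2
    calc |f (n+1) - f n|
        ≤ |Real.log (1+u) - u| + |u - α/n| + |α| * |Real.log (1+1/(n:ℝ)) - 1/n| := by
          rw [hfd]
          calc |(Real.log (1+u) - u) + (u - α/n) - α * (Real.log (1+1/(n:ℝ)) - 1/n)|
              ≤ |(Real.log (1+u) - u) + (u - α/n)| + |α * (Real.log (1+1/(n:ℝ)) - 1/n)| :=
                abs_sub _ _
            _ ≤ |Real.log (1+u) - u| + |u - α/n| + |α| * |Real.log (1+1/(n:ℝ)) - 1/n| := by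
                rw [abs_mul]
                have := abs_add_le (Real.log (1+u) - u) (u - α/n)
                linarith
      _ ≤ 2*(A/n)^2 + K/(n:ℝ)^2 + |α| * (2*(1/(n:ℝ))^2) := by
          have h1 : |Real.log (1+u) - u| ≤ 2*(A/n)^2 := b1.trans (by linarith)
          have h2 : |u - α/n| ≤ K/(n:ℝ)^2 := by rw [hue]; exact hen
          have h3 : |α| * |Real.log (1+1/(n:ℝ)) - 1/n| ≤ |α| * (2*(1/(n:ℝ))^2) :=
            mul_le_mul_of_nonneg_left b2 (abs_nonneg α)
          linarith
      _ = (2*A^2 + K + 2*|α|) * ((n:ℝ)^2)⁻¹ := by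
          field_simp
  -- summability and convergence of f
  have hdO : (fun n : ℕ => f (n+1) - f n) =O[atTop] fun n : ℕ => ((n:ℝ)^2)⁻¹ := by
    rw [isBigO_iff]
    refine ⟨2*A^2 + K + 2*|α|, eventually_atTop.mpr ⟨N, fun n hn => ?_⟩⟩
    rw [Real.norm_eq_abs, Real.norm_eq_abs, abs_of_nonneg (by positivity : (0:ℝ) ≤ ((n:ℝ)^2)⁻¹)]
    exact hmain n hn
  have hsum : Summable (fun n : ℕ => f (n+1) - f n) :=
    summable_of_isBigO_nat (Real.summable_nat_pow_inv.mpr one_lt_two) hdO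
  have hftend : Tendsto f atTop (𝓝 ((∑' n : ℕ, (f (n+1) - f n)) + f 0)) := by
    have h1 := hsum.hasSum.tendsto_sum_nat
    have h2 : Tendsto (fun n => f n - f 0) atTop (𝓝 (∑' n : ℕ, (f (n+1) - f n))) :=
      h1.congr (fun n => Finset.sum_range_sub f n)
    have h3 := h2.add_const (f 0)
    simpa using h3
  -- sign analysis
  have hpos : ∀ n, N ≤ n → 0 < y (n+1) / y n := by
    intro n hn
    have hN₁n : N₁ ≤ n := le_trans (le_trans (le_max_left _ _) (le_max_left _ _)) hn
    have h2n : (2:ℝ) ≤ n := by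
      have : 2 ≤ n := le_trans (le_trans (le_max_right N₁ 2) (le_max_left _ _)) hn
      exact_mod_cast this
    have h0n : (0:ℝ) < n := by linarith
    have hAn : 2*A ≤ n := by
      have h' : ⌈(2*A)⌉₊ ≤ n := le_trans (le_max_right _ _) hn
      exact le_trans (Nat.le_ceil _) (by exact_mod_cast h')
    have hen : |y (n+1)/y n - (1 + α/n)| ≤ K / (n:ℝ)^2 := by
      have h1 := hN₁ n hN₁n
      rw [Real.norm_eq_abs, Real.norm_eq_abs, abs_of_nonneg (by positivity : (0:ℝ) ≤ ((n:ℝ)^2)⁻¹)] at h1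
      calc |y (n+1)/y n - (1 + α/n)| ≤ c * ((n:ℝ)^2)⁻¹ := h1
        _ ≤ K * ((n:ℝ)^2)⁻¹ := by gcongr; exact le_max_left _ _
        _ = K / (n:ℝ)^2 := by rw [div_eq_mul_inv]
    have habs : |α / n| + |y (n+1)/y n - (1 + α/n)| ≤ 1/2 := by
      have hnsq : (n:ℝ) ≤ (n:ℝ)^2 := by nlinarith
      have e1 : |α / n| ≤ |α| / n := by rw [abs_div, abs_of_pos h0n]
      have e2 : K / (n:ℝ)^2 ≤ K / n := by gcongr
      have e3 : (|α| + K) / n ≤ A / n := by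
        have hA : A = |α| + K + 1 := hAdef
        gcongr
        linarith
      have e4 : A / n ≤ 1/2 := by rw [div_le_iff₀ h0n]; linarith
      have : |α| / n + K / n = (|α| + K) / n := (add_div _ _ _).symm
      linarith
    have hsum2 : |α / n + (y (n+1)/y n - (1 + α/n))| ≤ 1/2 :=
      (abs_add_le _ _).trans habs
    obtain ⟨hl, hr⟩ := abs_le.mp hsum2
    have hre : y (n+1)/y n = 1 + (α / n + (y (n+1)/y n - (1 + α/n))) := by ring
    rw [hre]
    linarith
  set ε : ℝ := if 0 < y N then 1 else -1 with hεdef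
  have hεval : ε = 1 ∨ ε = -1 := by
    by_cases h0 : 0 < y N <;> simp [hεdef, h0]
  have hε : ∀ n, N ≤ n → 0 < ε * y n := by
    intro n hn
    induction n, hn using Nat.le_induction with
    | base =>
      by_cases h0 : 0 < y N
      · simp [hεdef, h0]
      · have : y N < 0 := lt_of_le_of_ne (not_lt.mp h0) (hy N)
        simp only [hεdef, h0, if_false]
        linarith
    | succ n hn ih =>
      rcases div_pos_iff.mp (hpos n hn) with ⟨h1, h2⟩ | ⟨h1, h2⟩
      · rcases hεval with he | he <;> rw [he] at ih ⊢ <;> nlinarith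
      · rcases hεval with he | he <;> rw [he] at ih ⊢ <;> nlinarith
  have hε2 : ε * ε = 1 := by rcases hεval with he | he <;> rw [he] <;> norm_num
  -- eventual equality
  have heq : ∀ n, max N 1 ≤ n → y n / (n:ℝ)^α = ε * Real.exp (f n) := by
    intro n hn
    have hNn : N ≤ n := le_trans (le_max_left _ _) hn
    have h0n : (0:ℝ) < n := by
      have : 1 ≤ n := le_trans (le_max_right _ _) hn
      exact_mod_cast this
    have habs : |y n| = ε * y n := by
      have h1 := hε n hNn
      rcases hεval with he | he <;> rw [he] at h1 ⊢
      · rw [abs_of_pos (by linarith), one_mul]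
      · rw [abs_of_neg (by linarith)]; ring
    have hexp : Real.exp (f n) = |y n| / (n:ℝ)^α := by
      simp only [hfdef]
      rw [Real.exp_sub, Real.exp_log (abs_pos.mpr (hy n)), Real.rpow_def_of_pos h0n, mul_comm]
    rw [hexp, habs, ← mul_div_assoc, ← mul_assoc, hε2, one_mul]
  refine ⟨ε * Real.exp ((∑' n : ℕ, (f (n+1) - f n)) + f 0), ?_, ?_⟩
  · rcases hεval with he | he <;> rw [he] <;> simp [Real.exp_ne_zero]
  · have htend : Tendsto (fun n => ε * Real.exp (f n)) atTop
        (𝓝 (ε * Real.exp ((∑' n : ℕ, (f (n+1) - f n)) + f 0))) :=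
      ((Real.continuous_exp.tendsto _).comp hftend).const_mul ε
    refine htend.congr' ?_
    filter_upwards [eventually_ge_atTop (max N 1)] with n hn
    exact (heq n hn).symm
end

section
/- (Feller's identity, corrected) For every positive integer n, ln(n!) − (1/2)·ln n = I(n) − I(1/2) + Σ_{k=1}^{n−1} (a_k − b_k) + a_n, where I(x) = ∫_0^x ln t dt, a_k = ∫_{k−1/2}^{k} ln(k/t) dt, and b_k = ∫_{k}^{k+1/2} ln(t/k) dt. -/
open Nat MeasureTheory

/-- `I x = ∫_0^x ln t dt`. -/
noncomputable def fellerI (x : ℝ) : ℝ := ∫ t in (0 : ℝ)..x, Real.log t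

/-- `a_k = ∫_{k−1/2}^{k} ln (k/t) dt`. -/
noncomputable def fellerA (k : ℕ) : ℝ := ∫ t in ((k : ℝ) - 1 / 2)..(k : ℝ), Real.log (k / t)

/-- `b_k = ∫_{k}^{k+1/2} ln (t/k) dt`. -/
noncomputable def fellerB (k : ℕ) : ℝ := ∫ t in (k : ℝ)..((k : ℝ) + 1 / 2), Real.log (t / k)

lemma log_intervalIntegrable {x : ℝ} (hx : 0 ≤ x) :
    IntervalIntegrable Real.log volume 0 x := by
  rcases eq_or_lt_of_le hx with rfl | hx
  · simp
  have hg : IntervalIntegrable (fun t : ℝ => 2 * t ^ (-(1/2) : ℝ) + t) volume 0 x := by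
    exact ((intervalIntegral.intervalIntegrable_rpow' (by norm_num)).const_mul 2).add
      (continuous_id.intervalIntegrable _ _)
  refine hg.mono_fun Real.measurable_log.aestronglyMeasurable ?_
  filter_upwards [MeasureTheory.ae_restrict_mem measurableSet_uIoc] with t ht
  rw [Set.uIoc_of_le hx.le] at ht
  have ht0 : 0 < t := ht.1
  have hpow : 0 < t ^ (-(1/2) : ℝ) := Real.rpow_pos_of_pos ht0 _
  have hgt : 0 < 2 * t ^ (-(1/2) : ℝ) + t := by positivity
  rw [Real.norm_eq_abs, Real.norm_eq_abs, abs_of_pos hgt]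
  rcases le_or_gt 0 (Real.log t) with h | h
  · rw [abs_of_nonneg h]
    have := Real.log_le_sub_one_of_pos ht0
    linarith
  · rw [abs_of_neg h]
    have h1 : Real.log (t ^ (-(1/2) : ℝ)) = -(1/2) * Real.log t := Real.log_rpow ht0 _
    have h2 : Real.log (t ^ (-(1/2) : ℝ)) ≤ t ^ (-(1/2) : ℝ) - 1 :=
      Real.log_le_sub_one_of_pos hpow
    nlinarith

lemma fellerI_eq {x : ℝ} (hx : 0 ≤ x) : fellerI x = x * Real.log x - x := by
  have key : ∫ t in (0:ℝ)..x, Real.log t =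
      (x * Real.log x - x) - (0 * Real.log 0 - 0) := by
    refine intervalIntegral.integral_eq_sub_of_hasDeriv_right_of_le hx
      ((Real.continuous_mul_log.sub continuous_id).continuousOn) (fun t ht => ?_)
      (log_intervalIntegrable hx)
    have h1 : HasDerivAt (fun t : ℝ => t * Real.log t) (Real.log t + 1) t := by
      have := (hasDerivAt_id t).mul (Real.hasDerivAt_log ht.1.ne')
      exact this.congr_deriv (by simp [ht.1.ne'])
    have h2 : HasDerivAt (fun t : ℝ => t * Real.log t - t) (Real.log t) t := by
      exact (h1.sub (hasDerivAt_id' t)).congr_deriv (by ring)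
    exact h2.hasDerivWithinAt
  simpa [fellerI, Real.log_zero] using key

lemma fellerA_eq {k : ℕ} (hk : 1 ≤ k) :
    fellerA k = (1/2) * Real.log k -
      (((k:ℝ) * Real.log k - k) - (((k:ℝ) - 1/2) * Real.log ((k:ℝ) - 1/2) - ((k:ℝ) - 1/2))) := by
  have hk1 : (1:ℝ) ≤ (k:ℝ) := by exact_mod_cast hk
  have h0 : (0:ℝ) < (k:ℝ) - 1/2 := by linarith
  have hkpos : (0:ℝ) < (k:ℝ) := by linarith
  have hcongr : fellerA k = ∫ t in ((k:ℝ) - 1/2)..(k:ℝ), (Real.log k - Real.log t) := by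
    refine intervalIntegral.integral_congr (fun t ht => ?_)
    rw [Set.uIcc_of_le (by linarith)] at ht
    rw [Real.log_div hkpos.ne' (by linarith [ht.1] : t ≠ 0)]
  rw [hcongr, intervalIntegral.integral_sub intervalIntegrable_const
      (intervalIntegral.intervalIntegrable_log (by
        rw [Set.uIcc_of_le (show (k:ℝ)-1/2 ≤ k by linarith), Set.mem_Icc]
        push_neg; intro h; linarith)),
    intervalIntegral.integral_const, integral_log]
  rw [smul_eq_mul]
  ring

lemma fellerB_eq {k : ℕ} (hk : 1 ≤ k) :
    fellerB k = (((k:ℝ) + 1/2) * Real.log ((k:ℝ) + 1/2) - ((k:ℝ) + 1/2))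
      - ((k:ℝ) * Real.log k - k) - (1/2) * Real.log k := by
  have hk1 : (1:ℝ) ≤ (k:ℝ) := by exact_mod_cast hk
  have hkpos : (0:ℝ) < (k:ℝ) := by linarith
  have hcongr : fellerB k = ∫ t in (k:ℝ)..((k:ℝ) + 1/2), (Real.log t - Real.log k) := by
    refine intervalIntegral.integral_congr (fun t ht => ?_)
    rw [Set.uIcc_of_le (by linarith)] at ht
    rw [Real.log_div (by linarith [ht.1] : t ≠ 0) hkpos.ne']
  rw [hcongr, intervalIntegral.integral_sub
      (intervalIntegral.intervalIntegrable_log (by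
        rw [Set.uIcc_of_le (show (k:ℝ) ≤ k + 1/2 by linarith), Set.mem_Icc]
        push_neg; intro h; linarith))
      intervalIntegrable_const,
    intervalIntegral.integral_const, integral_log]
  rw [smul_eq_mul]
  ring

/-- **Feller's identity (corrected)**: for every positive integer `n`,
`ln n! − (1/2) ln n = I(n) − I(1/2) + Σ_{k=1}^{n−1} (a_k − b_k) + a_n`. -/
theorem feller_identity (n : ℕ) (hn : 1 ≤ n) :
    Real.log (n ! : ℝ) - (1 / 2) * Real.log n =
      fellerI n - fellerI (1 / 2) +
        (∑ k ∈ Finset.Icc 1 (n - 1), (fellerA k - fellerB k)) + fellerA n := by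
  induction n, hn using Nat.le_induction with
  | base =>
    simp only [Nat.factorial_one, Nat.cast_one, Real.log_one, Nat.sub_self,
      Finset.Icc_self]
    rw [fellerI_eq (by norm_num : (0:ℝ) ≤ (1:ℝ)), fellerI_eq (by norm_num : (0:ℝ) ≤ (1/2:ℝ)),
      fellerA_eq le_rfl]
    norm_num
    ring
  | succ n hn ih =>
    have hsum : Finset.Icc 1 (n + 1 - 1) = Finset.Icc 1 (n - 1) ∪ {n} := by
      rw [Nat.add_sub_cancel]
      ext k
      simp only [Finset.mem_Icc, Finset.mem_union, Finset.mem_singleton]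
      omega
    have hdisj : Disjoint (Finset.Icc 1 (n - 1)) ({n} : Finset ℕ) := by
      simp only [Finset.disjoint_singleton_right, Finset.mem_Icc]
      omega
    rw [hsum, Finset.sum_union hdisj, Finset.sum_singleton]
    have hfact : Real.log ((n + 1)! : ℝ) = Real.log (n + 1 : ℝ) + Real.log (n ! : ℝ) := by
      rw [Nat.factorial_succ]
      push_cast
      rw [Real.log_mul (by positivity) (by positivity)]
    have hn1 : (1:ℝ) ≤ (n:ℝ) := by exact_mod_cast hn
    have hA1 := fellerA_eq (show 1 ≤ n + 1 by omega)
    have hAn := fellerA_eq hn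
    have hBn := fellerB_eq hn
    have hIn1 := fellerI_eq (show (0:ℝ) ≤ ((n+1:ℕ):ℝ) by positivity)
    have hIn := fellerI_eq (show (0:ℝ) ≤ ((n:ℕ):ℝ) by positivity)
    push_cast at hfact hA1 hAn hBn hIn1 hIn ⊢
    have e : ((n:ℝ) + 1 - 1/2) = (n:ℝ) + 1/2 := by ring
    rw [e] at hA1
    rw [hfact, hIn1, hA1, hAn, hBn]
    push_cast at ih
    rw [hIn] at ih
    linarith [ih]
end

section
/- (Feller) The series Σ_{k=1}^{∞} (a_k − b_k) converges and Σ_{k=1}^{∞} (a_k − b_k) − I(1/2) = (1/2)·ln(2π), where I(x) = ∫_0^x ln t dt, a_k = ∫_{k−1/2}^{k} ln(k/t) dt, and b_k = ∫_{k}^{k+1/2} ln(t/k) dt. -/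
open Filter Topology Real

section FellerAux
open MeasureTheory intervalIntegral

noncomputable def fJ (x : ℝ) : ℝ := x * Real.log x - x

lemma log_intable : IntervalIntegrable Real.log volume 0 (1/2) := by
  rw [intervalIntegrable_iff_integrableOn_Ioc_of_le (by norm_num)]
  have hg : IntegrableOn (fun t : ℝ => 2 * t ^ (-(1/2) : ℝ)) (Set.Ioc 0 (1/2)) volume := by
    have h := (intervalIntegral.intervalIntegrable_rpow' (a := 0) (b := 1/2) (r := -(1/2)) (by norm_num))
    rw [intervalIntegrable_iff_integrableOn_Ioc_of_le (by norm_num)] at h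
    exact h.const_mul 2
  refine hg.integrable.mono' Real.measurable_log.aestronglyMeasurable ?_
  filter_upwards [ae_restrict_mem measurableSet_Ioc] with t ht
  obtain ⟨ht0, ht1⟩ := ht
  have hlog : Real.log t ≤ 0 := Real.log_nonpos ht0.le (by linarith)
  rw [Real.norm_eq_abs, abs_of_nonpos hlog]
  have h1 : -Real.log t = Real.log t⁻¹ := (Real.log_inv t).symm
  have h2 : Real.log t⁻¹ = 2 * Real.log (t⁻¹ ^ ((1:ℝ)/2)) := by
    rw [Real.log_rpow (by positivity)]; ring
  have h3 : Real.log (t⁻¹ ^ ((1:ℝ)/2)) ≤ t⁻¹ ^ ((1:ℝ)/2) := by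
    have := Real.log_le_sub_one_of_pos (x := t⁻¹ ^ ((1:ℝ)/2)) (by positivity)
    linarith
  have h4 : t⁻¹ ^ ((1:ℝ)/2) = t ^ (-(1/2) : ℝ) := by
    rw [← Real.rpow_neg_one, ← Real.rpow_mul ht0.le]
    norm_num
  rw [h1, h2, h4]
  rw [h4] at h3
  linarith

lemma fellerI_half' : (∫ t in (0:ℝ)..(1/2), Real.log t) = fJ (1/2) := by
  have key : (∫ t in (0:ℝ)..(1/2), Real.log t)
      = ((1/2 : ℝ) * Real.log (1/2) - 1/2) - ((0:ℝ) * Real.log 0 - 0) := by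
    apply intervalIntegral.integral_eq_sub_of_hasDeriv_right_of_le (f := fun x => x * Real.log x - x) (f' := Real.log) (by norm_num)
    · exact (Real.continuous_mul_log.sub continuous_id).continuousOn
    · intro x hx
      have hx0 : x ≠ 0 := (hx.1).ne'
      have h := (Real.hasDerivAt_mul_log hx0).sub (hasDerivAt_id x)
      have h2 := h.hasDerivWithinAt (s := Set.Ioi x)
      rw [add_sub_cancel_right] at h2
      exact h2
    · exact log_intable
  simpa [fJ, Real.log_zero] using key

lemma feller_ab (k : ℕ) (hk : 1 ≤ k) :
    fellerA k - fellerB k = Real.log k + fJ ((k:ℝ) - 1/2) - fJ ((k:ℝ) + 1/2) := by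
  have hk1 : (1:ℝ) ≤ (k:ℝ) := by exact_mod_cast hk
  have h0 : (0:ℝ) < (k:ℝ) - 1/2 := by linarith
  have hkpos : (0:ℝ) < (k:ℝ) := by linarith
  have hA : fellerA k = ((k:ℝ) - ((k:ℝ) - 1/2)) * Real.log k
      - ((k:ℝ) * Real.log k - (k:ℝ) - (((k:ℝ)-1/2) * Real.log ((k:ℝ)-1/2) - ((k:ℝ)-1/2))) := by
    unfold fellerA
    rw [intervalIntegral.integral_congr (g := fun t => Real.log k - Real.log t) ?_]
    · rw [intervalIntegral.integral_sub intervalIntegrable_const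
        (intervalIntegrable_log (by
          rw [Set.uIcc_of_le (by linarith)]
          rintro ⟨h1, h2⟩; linarith))]
      rw [intervalIntegral.integral_const, integral_log]
      ring_nf
    · intro t ht
      rw [Set.uIcc_of_le (by linarith)] at ht
      have ht0 : t ≠ 0 := by have := ht.1; intro h; rw [h] at this; linarith
      exact Real.log_div hkpos.ne' ht0
  have hB : fellerB k = (((k:ℝ)+1/2) * Real.log ((k:ℝ)+1/2) - ((k:ℝ)+1/2)
      - ((k:ℝ) * Real.log k - (k:ℝ))) - (((k:ℝ)+1/2) - (k:ℝ)) * Real.log k := by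
    unfold fellerB
    rw [intervalIntegral.integral_congr (g := fun t => Real.log t - Real.log k) ?_]
    · rw [intervalIntegral.integral_sub (intervalIntegrable_log (by
          rw [Set.uIcc_of_le (by linarith)]
          rintro ⟨h1, h2⟩; linarith)) intervalIntegrable_const]
      rw [intervalIntegral.integral_const, integral_log]
      simp [smul_eq_mul]
      ring
    · intro t ht
      rw [Set.uIcc_of_le (by linarith)] at ht
      have ht0 : t ≠ 0 := by have := ht.1; intro h; rw [h] at this; linarith
      exact Real.log_div ht0 hkpos.ne'
  rw [hA, hB]
  simp only [fJ]
  ring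

lemma feller_sum (n : ℕ) :
    ∑ k ∈ Finset.Icc 1 n, (fellerA k - fellerB k)
      = Real.log (Nat.factorial n) + (fJ (1/2) - fJ ((n:ℝ) + 1/2)) := by
  have key : ∀ f : ℕ → ℝ, ∑ k ∈ Finset.Icc 1 n, f k = ∑ i ∈ Finset.range n, f (i+1) := by
    intro f
    rw [← Finset.Ico_add_one_right_eq_Icc, Finset.sum_Ico_eq_sum_range]
    simp [add_comm]
  rw [key]
  have h1 : ∀ i ∈ Finset.range n, fellerA (i+1) - fellerB (i+1)
      = Real.log ((i:ℝ)+1) + ((fun j : ℕ => fJ ((j:ℝ)+1/2)) i - (fun j : ℕ => fJ ((j:ℝ)+1/2)) (i+1)) := by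
    intro i _
    have h := feller_ab (i+1) (Nat.le_add_left 1 i)
    push_cast at h ⊢
    rw [h]
    ring_nf
  rw [Finset.sum_congr rfl h1, Finset.sum_add_distrib, Finset.sum_range_sub' (fun j : ℕ => fJ ((j:ℝ)+1/2)) n]
  have hfact : ((Nat.factorial n : ℕ) : ℝ) = ∏ i ∈ Finset.range n, ((i:ℝ)+1) := by
    rw [← Finset.prod_range_add_one_eq_factorial n]
    push_cast
    rfl
  have hlog : ∑ i ∈ Finset.range n, Real.log ((i:ℝ)+1) = Real.log (Nat.factorial n) := by
    rw [hfact, Real.log_prod (fun i _ => by positivity)]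
  rw [hlog]
  norm_num

lemma feller_limit :
    Tendsto (fun n : ℕ => Real.log (Nat.factorial n) - fJ ((n:ℝ) + 1/2)) atTop
      (𝓝 ((1/2) * Real.log (2 * π))) := by
  have hspos : (0:ℝ) < √π := Real.sqrt_pos.mpr Real.pi_pos
  have h1 : Tendsto (fun n : ℕ => Real.log (Stirling.stirlingSeq n)) atTop (𝓝 (Real.log (√π))) :=
    ((Real.continuousAt_log hspos.ne').tendsto).comp Stirling.tendsto_stirlingSeq_sqrt_pi
  have h2 : Tendsto (fun n : ℕ => (n:ℝ) * Real.log (1 + (1/2)/(n:ℝ))) atTop (𝓝 (1/2)) :=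
    (Real.tendsto_mul_log_one_add_div_atTop (1/2)).comp tendsto_natCast_atTop_atTop
  have h3 : Tendsto (fun n : ℕ => Real.log (1 + (1/2)/(n:ℝ))) atTop (𝓝 0) := by
    have ht : Tendsto (fun n : ℕ => 1 + (1/2)/(n:ℝ)) atTop (𝓝 1) := by
      simpa only [add_zero] using (tendsto_const_nhds (x := (1:ℝ)) (f := atTop)).add
        (tendsto_const_div_atTop_nhds_zero_nat (1/2))
    have := ((Real.continuousAt_log one_ne_zero).tendsto).comp ht
    simpa only [Function.comp_def, Real.log_one] using this
  have key : Tendsto (fun n : ℕ => Real.log (Stirling.stirlingSeq n) + (1/2) * Real.log 2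
      - ((n:ℝ) * Real.log (1 + (1/2)/(n:ℝ)) + (1/2) * Real.log (1 + (1/2)/(n:ℝ))) + 1/2) atTop
      (𝓝 (Real.log (√π) + (1/2) * Real.log 2 - (1/2 + (1/2) * 0) + 1/2)) :=
    (((h1.add_const _).sub (h2.add (h3.const_mul _))).add_const _)
  have hval : Real.log (√π) + (1/2) * Real.log 2 - (1/2 + (1/2) * (0:ℝ)) + 1/2
      = (1/2) * Real.log (2 * π) := by
    rw [Real.log_sqrt Real.pi_pos.le, Real.log_mul two_ne_zero Real.pi_ne_zero]
    ring
  rw [hval] at key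
  apply key.congr'
  filter_upwards [eventually_ge_atTop 1] with n hn
  have hn0 : (0:ℝ) < (n:ℝ) := by exact_mod_cast hn
  have e1 : Real.log (Nat.factorial n) = Real.log (Stirling.stirlingSeq n) + 1/2 * Real.log (2*n)
      + (n:ℝ) * Real.log ((n:ℝ) / Real.exp 1) := by
    have := Stirling.log_stirlingSeq_formula n
    linarith
  have e2 : Real.log (2*(n:ℝ)) = Real.log 2 + Real.log n := Real.log_mul two_ne_zero hn0.ne'
  have e3 : Real.log ((n:ℝ) / Real.exp 1) = Real.log n - 1 := by
    rw [Real.log_div hn0.ne' (Real.exp_ne_zero 1), Real.log_exp]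
  have e4 : Real.log ((n:ℝ) + 1/2) = Real.log n + Real.log (1 + (1/2)/(n:ℝ)) := by
    rw [← Real.log_mul hn0.ne' (by positivity)]
    congr 1
    field_simp
  simp only [fJ]
  rw [e1, e2, e3, e4]
  ring

end FellerAux

/-- **Feller**: the series `Σ_{k=1}^∞ (a_k − b_k)` converges, and its sum satisfies
`Σ_{k=1}^∞ (a_k − b_k) − I(1/2) = (1/2) ln (2π)`. -/
theorem feller_series :
    Tendsto (fun n : ℕ => ∑ k ∈ Finset.Icc 1 n, (fellerA k - fellerB k)) atTop
      (𝓝 ((1 / 2) * Real.log (2 * π) + fellerI (1 / 2))) := by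
  have hI : fellerI (1/2) = fJ (1/2) := fellerI_half'
  rw [hI]
  apply (feller_limit.add_const (fJ (1/2))).congr
  intro n
  rw [feller_sum n]
  ring
end

section
/- (Mermin's identity) For every positive integer n, the infinite product Π_{k=n}^{∞} e^{-1}·(1 + 1/k)^{k + 1/2} converges and equals e^{r_n} = n!·e^n / (√(2πn)·n^n), where r_n = ln( n!·e^n / (√(2πn)·n^n) ). -/
open Real Nat Filter Topology

noncomputable def merminG (m : ℕ) : ℝ :=
  (m ! : ℝ) * Real.exp m / (Real.sqrt (2 * π * m) * (m : ℝ) ^ m)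

lemma merminG_pos {m : ℕ} (hm : 1 ≤ m) : 0 < merminG m := by
  have hm' : (0:ℝ) < m := by exact_mod_cast hm
  have hπ := Real.pi_pos
  unfold merminG
  positivity

lemma merminG_eq_stirling (m : ℕ) (hm : 1 ≤ m) :
    merminG m = Stirling.stirlingSeq m / Real.sqrt π := by
  have hm' : (0:ℝ) < m := by exact_mod_cast hm
  have he : (0:ℝ) < Real.exp 1 := Real.exp_pos 1
  unfold merminG Stirling.stirlingSeq
  rw [show (2:ℝ) * π * m = π * (2 * m) by ring, Real.sqrt_mul Real.pi_pos.le,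
    div_pow, Real.exp_one_pow]
  have hsq : (0:ℝ) < Real.sqrt (2 * m) := Real.sqrt_pos.2 (by positivity)
  field_simp

lemma merminG_factor (k : ℕ) (hk : 1 ≤ k) :
    Real.exp (-1) * Real.exp (((k : ℝ) + 1 / 2) * Real.log (1 + 1 / (k : ℝ)))
      = merminG k / merminG (k + 1) := by
  have hk' : (0:ℝ) < k := by exact_mod_cast hk
  have hx : (0:ℝ) < 1 + 1 / (k:ℝ) := by positivity
  have h1 : (1:ℝ) + 1 / k = ((k:ℝ) + 1) / k := by field_simp
  -- LHS as rpow
  have hL : Real.exp (((k : ℝ) + 1 / 2) * Real.log (1 + 1 / (k : ℝ)))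
      = (((k:ℝ)+1)/k) ^ (k : ℕ) * Real.sqrt (((k:ℝ)+1)/k) := by
    rw [mul_comm, Real.exp_mul, Real.exp_log hx, h1]
    rw [show (k:ℝ) + 1/2 = (k:ℝ) + (1/2 : ℝ) by norm_num,
      Real.rpow_add (by positivity), Real.rpow_natCast,
      ← Real.sqrt_eq_rpow]
  rw [hL]
  unfold merminG
  have hfac : ((k+1)! : ℝ) = ((k:ℝ)+1) * (k ! : ℝ) := by
    rw [Nat.factorial_succ]; push_cast; ring
  have hsq : Real.sqrt (2 * π * ((k:ℕ)+1 : ℕ)) = Real.sqrt (2 * π * k) * Real.sqrt (((k:ℝ)+1)/k) := by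
    rw [← Real.sqrt_mul (by positivity)]
    push_cast
    congr 1
    field_simp
  have hexp : Real.exp ((k:ℕ)+1 : ℕ) = Real.exp k * Real.exp 1 := by
    push_cast; rw [← Real.exp_add]
  have hpow : (((k:ℕ)+1 : ℕ) : ℝ) ^ ((k:ℕ)+1 : ℕ) = ((k:ℝ)+1) ^ k * ((k:ℝ)+1) := by
    push_cast; ring
  rw [hfac, hsq, hexp, hpow]
  have h2 : Real.exp (-1) = (Real.exp 1)⁻¹ := by rw [← Real.exp_neg]
  have hsp : (0:ℝ) < Real.sqrt (2 * π * k) := Real.sqrt_pos.2 (by positivity)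
  have hsx : (0:ℝ) < Real.sqrt (((k:ℝ)+1)/k) := Real.sqrt_pos.2 (by positivity)
  have hf : (0:ℝ) < (k ! : ℝ) := by exact_mod_cast k.factorial_pos
  have hep : (0:ℝ) < Real.exp k := Real.exp_pos _
  have he1 : (0:ℝ) < Real.exp 1 := Real.exp_pos _
  have hkp : (0:ℝ) < (k:ℝ) ^ k := by positivity
  rw [h2, div_pow]
  rw [div_div_div_eq]
  field_simp

lemma merminG_telescope (n : ℕ) (hn : 1 ≤ n) :
    ∀ m, n ≤ m →
      (∏ k ∈ Finset.Icc n m,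
          Real.exp (-1) * Real.exp (((k : ℝ) + 1 / 2) * Real.log (1 + 1 / (k : ℝ))))
        = merminG n / merminG (m + 1) := by
  intro m hm
  induction m, hm using Nat.le_induction with
  | base =>
    rw [Finset.Icc_self, Finset.prod_singleton, merminG_factor n hn]
  | succ m hm ih =>
    rw [Finset.prod_Icc_succ_top (by omega), ih, merminG_factor (m+1) (by omega)]
    have h1 : merminG (m+1) ≠ 0 := (merminG_pos (by omega)).ne'
    field_simp

/-- **Mermin's identity**: for every positive integer `n`, the infinite product
`Π_{k=n}^∞ e⁻¹ (1 + 1/k)^{k+1/2}` converges to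
`e^{r_n} = n! eⁿ / (√(2πn) nⁿ)`, where `(1 + 1/k)^{k+1/2} = exp((k+1/2) ln (1+1/k))`. -/
theorem mermin_identity (n : ℕ) (hn : 1 ≤ n) :
    Tendsto (fun m : ℕ =>
        ∏ k ∈ Finset.Icc n m,
          Real.exp (-1) * Real.exp (((k : ℝ) + 1 / 2) * Real.log (1 + 1 / (k : ℝ))))
      atTop
      (𝓝 ((n ! : ℝ) * Real.exp n / (Real.sqrt (2 * π * n) * (n : ℝ) ^ n))) := by
  have hG : Tendsto (fun m : ℕ => merminG (m + 1)) atTop (𝓝 1) := by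
    have h1 : Tendsto (fun m : ℕ => Stirling.stirlingSeq (m+1) / Real.sqrt π) atTop
        (𝓝 (Real.sqrt π / Real.sqrt π)) :=
      (Stirling.tendsto_stirlingSeq_sqrt_pi.comp (tendsto_add_atTop_nat 1)).div_const _
    have hπ : Real.sqrt π ≠ 0 := (Real.sqrt_pos.2 Real.pi_pos).ne'
    rw [div_self hπ] at h1
    refine h1.congr fun m => ?_
    rw [merminG_eq_stirling (m+1) (by omega)]
  have hlim : Tendsto (fun m : ℕ => merminG n / merminG (m + 1)) atTop (𝓝 (merminG n)) := by
    have := (tendsto_const_nhds (x := merminG n) (f := atTop (α := ℕ))).div hG one_ne_zero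
    rw [div_one] at this
    exact this
  have : Tendsto (fun m : ℕ =>
      ∏ k ∈ Finset.Icc n m,
        Real.exp (-1) * Real.exp (((k : ℝ) + 1 / 2) * Real.log (1 + 1 / (k : ℝ))))
      atTop (𝓝 (merminG n)) := by
    refine hlim.congr' ?_
    filter_upwards [eventually_ge_atTop n] with m hm
    exact (merminG_telescope n hn m hm).symm
  exact this
end
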